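/- For all integers k ≥ 2 and all ℓ with 0 < ℓ < C(k,2) = k(k−1)/2, we have ind(k, ℓ) < 1; that is, there exist ε > 0 and N such that for all n ≥ N and every graph G on n vertices, Pr[X_{G,k} = ℓ] ≤ 1 − ε. -/

import Mathlib

open Filter

/-- The number of edges of `G` with both endpoints in `A`. -/
noncomputable def edgeCount {V : Type*} (G : SimpleGraph V) (A : Finset V) : ℕ :=
  {e ∈ G.edgeSet | ∀ v ∈ e, v ∈ A}.ncard

/-- The probability that a uniformly random `k`-element subset `A` of `Fin n`
satisfies the property `P`. -/
noncomputable def uniformProb (n k : ℕ) (P : Finset (Fin n) → Prop) : ℝ :=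
  ({A : Finset (Fin n) | A.card = k ∧ P A}.ncard : ℝ) / (n.choose k)

/-- `I(n, k, ℓ)`: the maximum, over all graphs `G` on `n` vertices, of the probability
that a uniformly random `k`-element subset of the vertices induces exactly `ℓ` edges. -/
noncomputable def maxInduceProb (n k ℓ : ℕ) : ℝ :=
  ⨆ G : SimpleGraph (Fin n), uniformProb n k (fun A => edgeCount G A = ℓ)

/-- `ind(k, ℓ) = lim_{n → ∞} I(n, k, ℓ)`. -/
noncomputable def ind (k ℓ : ℕ) : ℝ :=
  limUnder atTop (fun n => maxInduceProb n k ℓ)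

/-!
If every `k`-subset of a set `S` of at least `k + 2` vertices spans exactly `ℓ` edges, then
comparing `T ∪ {u}` with `T ∪ {v}` shows that `u` and `v` have equally many neighbours in every
`(k - 1)`-set `T ⊆ S \ {u, v}`. Using the two spare vertices this forces `G[S]` to be complete or
empty, so `ℓ = 0` or `ℓ = C(k, 2)`. Hence for `0 < ℓ < C(k, 2)` every `(k + 2)`-set contains a
`k`-set with `≠ ℓ` edges, and double counting gives `Pr[X_{G,k} ≠ ℓ] ≥ 1 / C(k + 2, k)` once
`n ≥ k + 2`. The limit `ind k ℓ` exists because `I(n, k, ℓ)` is nonincreasing: the probability for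
`G` on `n + 1` vertices is the average over `v` of the probability for `G - v`.
-/

open Finset

section EdgeCount
variable {V : Type*} (G : SimpleGraph V)

theorem edgeCount_eq_card_filter_sym2 [DecidableRel G.Adj] (A : Finset V) :
    edgeCount G A = #{e ∈ A.sym2 | e ∈ G.edgeSet} := by
  rw [edgeCount, ← Set.ncard_coe_finset]
  congr 1
  ext e
  simp [and_comm]

theorem edgeCount_insert [DecidableEq V] [DecidableRel G.Adj] {u : V} {W : Finset V}
    (hu : u ∉ W) : edgeCount G (insert u W) = edgeCount G W + #{w ∈ W | G.Adj u w} := by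
  rw [edgeCount_eq_card_filter_sym2, edgeCount_eq_card_filter_sym2, ← cons_eq_insert _ _ hu,
    sym2_cons, filter_disjUnion, card_disjUnion, filter_map, card_map, filter_cons, add_comm]
  simp

theorem edgeCount_of_isIndepSet {A : Finset V} (h : G.IsIndepSet (A : Set V)) :
    edgeCount G A = 0 := by
  classical
  rw [edgeCount_eq_card_filter_sym2, card_eq_zero, filter_eq_empty_iff]
  intro e he
  induction e with
  | _ x y =>
    rw [mk_mem_sym2_iff] at he
    exact fun hxy => h he.1 he.2 (G.ne_of_adj hxy) hxy

theorem edgeCount_of_isClique {A : Finset V} (h : G.IsClique (A : Set V)) :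
    edgeCount G A = (#A).choose 2 := by
  classical
  induction A using Finset.induction_on with
  | empty => simp [edgeCount_of_isIndepSet]
  | @insert u W hu ih =>
    rw [coe_insert, SimpleGraph.isClique_insert] at h
    have hadj : {w ∈ W | G.Adj u w} = W :=
      filter_true_of_mem fun w hw => h.2 w hw (ne_of_mem_of_not_mem hw hu).symm
    rw [edgeCount_insert G hu, ih h.1, hadj, card_insert_of_notMem hu, Nat.choose_succ_succ',
      Nat.choose_one_right, add_comm]

theorem edgeCount_comap {W : Type*} (f : W ↪ V) (B : Finset W) :
    edgeCount (G.comap f) B = edgeCount G (B.map f) := by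
  classical
  rw [edgeCount_eq_card_filter_sym2, edgeCount_eq_card_filter_sym2, sym2_map, filter_map,
    card_map]
  congr 2
  ext e
  induction e with
  | _ x y => simp

end EdgeCount

section ConstantEdgeCount
variable {V : Type*} [DecidableEq V] {G : SimpleGraph V} [DecidableRel G.Adj] {k ℓ : ℕ}
  {S : Finset V}

theorem card_filter_adj_eq_of_edgeCount_const
    (hS : ∀ A ⊆ S, #A = k → edgeCount G A = ℓ) {T : Finset V} (hTS : T ⊆ S) (hT : #T + 1 = k)
    {u v : V} (hu : u ∈ S \ T) (hv : v ∈ S \ T) :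
    #{w ∈ T | G.Adj u w} = #{w ∈ T | G.Adj v w} := by
  rw [Finset.mem_sdiff] at hu hv
  have hAu := hS (insert u T) (insert_subset hu.1 hTS) (by rw [card_insert_of_notMem hu.2, hT])
  have hAv := hS (insert v T) (insert_subset hv.1 hTS) (by rw [card_insert_of_notMem hv.2, hT])
  rw [edgeCount_insert G hu.2] at hAu
  rw [edgeCount_insert G hv.2] at hAv
  omega

theorem exists_subset_sdiff_card_eq {m : ℕ} (R : Finset V) (h : m + #R ≤ #S) :
    ∃ T ⊆ S \ R, #T = m :=
  exists_subset_card_eq (by have := le_card_sdiff R S; omega)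

/-- The quantity `[u ~ z] - [v ~ z]` does not depend on `z ∈ S \ {u, v}`. -/
theorem adj_indicator_sub_eq_of_edgeCount_const (hk : 2 ≤ k) (hcard : k + 2 ≤ #S)
    (hS : ∀ A ⊆ S, #A = k → edgeCount G A = ℓ) {u v z w : V} (hu : u ∈ S) (hv : v ∈ S)
    (hz : z ∈ S \ {u, v}) (hw : w ∈ S \ {u, v}) :
    (if G.Adj u z then 1 else 0) + (if G.Adj v w then 1 else 0) =
      (if G.Adj u w then 1 else 0) + (if G.Adj v z then 1 else 0) := by
  obtain ⟨T, hT, hTcard⟩ := exists_subset_sdiff_card_eq (S := S) (m := k - 2) {u, v, z, w}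
    (by have := card_le_four (a := u) (b := v) (c := z) (d := w); omega)
  have huT : u ∉ T := fun h => by simpa using (mem_sdiff.1 (hT h)).2
  have hvT : v ∉ T := fun h => by simpa using (mem_sdiff.1 (hT h)).2
  have hzT : z ∉ T := fun h => by simpa using (mem_sdiff.1 (hT h)).2
  have hwT : w ∉ T := fun h => by simpa using (mem_sdiff.1 (hT h)).2
  have hswap : ∀ x ∈ S \ {u, v}, x ∉ T → ∑ y ∈ insert x T, (if G.Adj u y then 1 else 0) =
      ∑ y ∈ insert x T, (if G.Adj v y then 1 else 0) := by
    intro x hx hxT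
    simp only [← card_filter]
    refine card_filter_adj_eq_of_edgeCount_const hS
      (insert_subset (mem_sdiff.1 hx).1 (hT.trans sdiff_subset))
      (by rw [card_insert_of_notMem hxT]; omega) ?_ ?_ <;> grind
  have h1 := hswap z hz hzT
  have h2 := hswap w hw hwT
  rw [sum_insert hzT, sum_insert hzT] at h1
  rw [sum_insert hwT, sum_insert hwT] at h2
  omega

theorem adj_of_adj_of_edgeCount_const (hk : 2 ≤ k) (hcard : k + 2 ≤ #S)
    (hS : ∀ A ⊆ S, #A = k → edgeCount G A = ℓ) {u v w : V} (hu : u ∈ S) (hv : v ∈ S)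
    (hw : w ∈ S) (hvw : v ≠ w) (huw : G.Adj u w) : G.Adj v w := by
  by_cases huv : u = v
  · exact huv ▸ huw
  by_contra hnadj
  have hdiff : ∀ z ∈ S \ {u, v}, G.Adj u z ∧ ¬ G.Adj v z := by
    intro z hz
    have := adj_indicator_sub_eq_of_edgeCount_const hk hcard hS hu hv hz (w := w)
      (by simp [hw, huw.ne.symm, hvw.symm])
    split_ifs at this <;> simp_all
  obtain ⟨T, hT, hTcard⟩ := exists_subset_sdiff_card_eq (S := S) (m := k - 1) {u, v}
    (by have := card_le_two (a := u) (b := v); omega)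
  have hswap := card_filter_adj_eq_of_edgeCount_const hS (hT.trans sdiff_subset)
    (by omega) (u := u) (v := v) (by grind) (by grind)
  rw [filter_true_of_mem fun z hz => (hdiff z (hT hz)).1,
    filter_false_of_mem fun z hz => (hdiff z (hT hz)).2, card_empty] at hswap
  omega

theorem isClique_or_isIndepSet_of_edgeCount_const (hk : 2 ≤ k) (hcard : k + 2 ≤ #S)
    (hS : ∀ A ⊆ S, #A = k → edgeCount G A = ℓ) :
    G.IsClique (S : Set V) ∨ G.IsIndepSet (S : Set V) := by
  by_cases hedge : ∃ a ∈ S, ∃ b ∈ S, G.Adj a b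
  · obtain ⟨a, ha, b, hb, hab⟩ := hedge
    left
    have hmove {u v w : V} (hu : u ∈ S) (hv : v ∈ S) (hw : w ∈ S) (hvw : v ≠ w)
        (h : G.Adj u w) : G.Adj v w :=
      adj_of_adj_of_edgeCount_const hk hcard hS hu hv hw hvw h
    intro x hx y hy hxy
    by_cases hxb : x = b
    · subst hxb
      exact (hmove ha hy hx hxy.symm hab).symm
    · exact (hmove hb hy hx hxy.symm (hmove ha hx hb hxb hab).symm).symm
  · exact .inr fun x hx y hy _ hxy => hedge ⟨x, hx, y, hy, hxy⟩

end ConstantEdgeCount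

theorem exists_subset_card_eq_edgeCount_ne {V : Type*} {G : SimpleGraph V} {k ℓ : ℕ}
    {S : Finset V} (hk : 2 ≤ k) (hℓ0 : 0 < ℓ) (hℓ : ℓ < k.choose 2) (hcard : k + 2 ≤ #S) :
    ∃ A ⊆ S, #A = k ∧ edgeCount G A ≠ ℓ := by
  classical
  by_contra! hS
  obtain ⟨A, hAS, hA⟩ := exists_subset_card_eq (show k ≤ #S by omega)
  have hcoe : (A : Set V) ⊆ S := coe_subset.2 hAS
  rcases isClique_or_isIndepSet_of_edgeCount_const hk hcard hS with hS' | hS'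
  · have := edgeCount_of_isClique G (Set.Pairwise.mono hcoe hS')
    rw [hA, hS A hAS hA] at this
    omega
  · have := edgeCount_of_isIndepSet G (Set.Pairwise.mono hcoe hS')
    rw [hS A hAS hA] at this
    omega

section DoubleCounting
variable {α : Type*} [Fintype α] [DecidableEq α]

theorem card_filter_superset_le (A : Finset α) (R : ℕ) :
    #{S ∈ powersetCard R univ | A ⊆ S} ≤ (Fintype.card α - #A).choose (R - #A) := by
  rw [← card_compl, ← card_powersetCard]
  refine card_le_card_of_injOn (· \ A) (fun S hS => ?_) (fun S hS S' hS' h => ?_)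
  · simp only [coe_filter, mem_powersetCard_univ] at hS
    rw [mem_coe, mem_powersetCard]
    refine ⟨fun x hx => by simp [(mem_sdiff.1 hx).2], ?_⟩
    rw [card_sdiff_of_subset hS.2, hS.1]
  · simp only [coe_filter] at hS hS'
    rw [← sdiff_union_of_subset hS.2, ← sdiff_union_of_subset hS'.2]
    exact congrArg (· ∪ A) h

theorem choose_le_mul_card_of_forall_exists_subset {k R : ℕ} (hkR : k ≤ R)
    (hR : R ≤ Fintype.card α) {𝒜 : Finset (Finset α)} (h𝒜 : ∀ A ∈ 𝒜, #A = k)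
    (hcover : ∀ S : Finset α, #S = R → ∃ A ∈ 𝒜, A ⊆ S) :
    (Fintype.card α).choose k ≤ R.choose k * #𝒜 := by
  set N := Fintype.card α
  have hcount : #(powersetCard R (univ : Finset α)) * 1 ≤ #𝒜 * (N - k).choose (R - k) := by
    refine card_mul_le_card_mul (fun S A => A ⊆ S) (fun S hS => card_pos.2 ?_)
      (fun A hA => h𝒜 A hA ▸ card_filter_superset_le A R)
    obtain ⟨A, hA, hAS⟩ := hcover S (mem_powersetCard_univ.1 hS)
    exact ⟨A, (mem_bipartiteAbove _).2 ⟨hA, hAS⟩⟩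
  rw [card_powersetCard, card_univ, mul_one] at hcount
  have hpos : 0 < (N - k).choose (R - k) := Nat.choose_pos (by omega)
  refine Nat.le_of_mul_le_mul_right ?_ hpos
  calc N.choose k * (N - k).choose (R - k) = N.choose R * R.choose k := (Nat.choose_mul hkR).symm
    _ ≤ #𝒜 * (N - k).choose (R - k) * R.choose k := Nat.mul_le_mul_right _ hcount
    _ = R.choose k * #𝒜 * (N - k).choose (R - k) := by ring

theorem sum_card_filter_notMem (𝒜 : Finset (Finset α)) :
    ∑ v, #{A ∈ 𝒜 | v ∉ A} = ∑ A ∈ 𝒜, (Fintype.card α - #A) := by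
  calc ∑ v, #{A ∈ 𝒜 | v ∉ A} = ∑ A ∈ 𝒜, #{v ∈ univ | v ∉ A} :=
        (sum_card_bipartiteAbove_eq_sum_card_bipartiteBelow (fun A v => v ∉ A)).symm
    _ = ∑ A ∈ 𝒜, (Fintype.card α - #A) := sum_congr rfl fun A _ => by
        rw [filter_notMem_eq_sdiff, ← compl_eq_univ_sdiff, card_compl]

end DoubleCounting

section UniformProb
variable {n k : ℕ}

theorem uniformProb_eq_card_div (P : Finset (Fin n) → Prop) [DecidablePred P] :
    uniformProb n k P = #{A ∈ powersetCard k univ | P A} / n.choose k := by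
  rw [uniformProb, ← Set.ncard_coe_finset]
  congr 3
  ext A
  simp

theorem uniformProb_nonneg (P : Finset (Fin n) → Prop) : 0 ≤ uniformProb n k P := by
  unfold uniformProb
  positivity

theorem uniformProb_add_uniformProb_not (hk : k ≤ n) (P : Finset (Fin n) → Prop) :
    uniformProb n k P + uniformProb n k (fun A => ¬ P A) = 1 := by
  classical
  rw [uniformProb_eq_card_div, uniformProb_eq_card_div, ← add_div, ← Nat.cast_add,
    card_filter_add_card_filter_not, card_powersetCard, card_univ, Fintype.card_fin,
    div_self (Nat.cast_ne_zero.2 (Nat.choose_pos hk).ne')]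

theorem card_filter_map_succAboveEmb (v : Fin (n + 1)) (P : Finset (Fin (n + 1)) → Prop)
    [DecidablePred P] :
    #{B ∈ powersetCard k univ | P (B.map v.succAboveEmb)} =
      #{A ∈ powersetCard k univ | P A ∧ v ∉ A} := by
  have hrange : (univ : Finset (Fin n)).map v.succAboveEmb = univ.erase v := by
    rw [Fin.univ_succAbove n v, erase_cons]
  have hfilter : {A ∈ powersetCard k (univ : Finset (Fin (n + 1))) | P A ∧ v ∉ A} =
      {A ∈ powersetCard k (univ.map v.succAboveEmb) | P A} := by
    ext A
    simp only [mem_filter, mem_powersetCard, hrange, subset_erase, subset_univ, true_and]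
    tauto
  rw [hfilter, powersetCard_map, filter_map, card_map]
  rfl

theorem uniformProb_succ (hk : k ≤ n) (P : Finset (Fin (n + 1)) → Prop) :
    uniformProb (n + 1) k P =
      (∑ v : Fin (n + 1), uniformProb n k (fun B => P (B.map v.succAboveEmb))) / (n + 1) := by
  classical
  simp only [uniformProb_eq_card_div, ← sum_div]
  rw [← Nat.cast_sum, sum_congr rfl fun v _ => card_filter_map_succAboveEmb v P]
  simp_rw [← filter_filter]
  rw [sum_card_filter_notMem, sum_congr rfl fun A hA => by
    rw [mem_powersetCard_univ.1 (mem_filter.1 hA).1, Fintype.card_fin], sum_const, smul_eq_mul]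
  have hn : (0 : ℝ) < n.choose k := by exact_mod_cast Nat.choose_pos hk
  have hn' : (0 : ℝ) < (n + 1).choose k := by exact_mod_cast Nat.choose_pos (by omega)
  field_simp
  norm_cast
  rw [mul_assoc, Nat.choose_mul_succ_eq]
  ring

end UniformProb

theorem uniformProb_edgeCount_eq_le {n k ℓ : ℕ} (hk : 2 ≤ k) (hℓ0 : 0 < ℓ)
    (hℓ : ℓ < k.choose 2) (hn : k + 2 ≤ n) (G : SimpleGraph (Fin n)) :
    uniformProb n k (fun A => edgeCount G A = ℓ) ≤ 1 - 1 / (k + 2).choose k := by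
  classical
  have hcover : n.choose k ≤
      (k + 2).choose k * #{A ∈ powersetCard k univ | ¬ edgeCount G A = ℓ} := by
    simpa using choose_le_mul_card_of_forall_exists_subset (α := Fin n) (R := k + 2) (by omega)
      (by simpa using hn)
      (fun A hA => mem_powersetCard_univ.1 (mem_filter.1 hA).1) fun S hS => by
        obtain ⟨A, hAS, hA, hne⟩ :=
          exists_subset_card_eq_edgeCount_ne (G := G) hk hℓ0 hℓ (by omega : k + 2 ≤ #S)
        exact ⟨A, mem_filter.2 ⟨mem_powersetCard_univ.2 hA, hne⟩, hAS⟩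
  have hne : 1 / ((k + 2).choose k : ℝ) ≤ uniformProb n k (fun A => ¬ edgeCount G A = ℓ) := by
    rw [uniformProb_eq_card_div, div_le_div_iff₀ (Nat.cast_pos.2 (Nat.choose_pos (by omega)))
      (Nat.cast_pos.2 (Nat.choose_pos (by omega))), one_mul, mul_comm]
    exact_mod_cast hcover
  linarith [uniformProb_add_uniformProb_not (by omega : k ≤ n) fun A => edgeCount G A = ℓ]

theorem maxInduceProb_nonneg (n k ℓ : ℕ) : 0 ≤ maxInduceProb n k ℓ :=
  Real.iSup_nonneg fun _ => uniformProb_nonneg _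

theorem maxInduceProb_succ_le {n k : ℕ} (ℓ : ℕ) (hk : k ≤ n) :
    maxInduceProb (n + 1) k ℓ ≤ maxInduceProb n k ℓ := by
  refine ciSup_le fun G => ?_
  have hG : ∀ v : Fin (n + 1),
      uniformProb n k (fun B => edgeCount G (B.map v.succAboveEmb) = ℓ) ≤ maxInduceProb n k ℓ :=
    fun v => by
      simp only [← edgeCount_comap]
      exact le_ciSup (f := fun H : SimpleGraph (Fin n) => uniformProb n k (edgeCount H · = ℓ))
        (Set.finite_range _).bddAbove (G.comap v.succAboveEmb)
  rw [uniformProb_succ hk, div_le_iff₀ (by positivity)]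
  calc _ ≤ ∑ _v : Fin (n + 1), maxInduceProb n k ℓ := sum_le_sum fun v _ => hG v
    _ = _ := by simp [mul_comm]

open Topology in
theorem tendsto_maxInduceProb_ind (k ℓ : ℕ) :
    Tendsto (fun n => maxInduceProb n k ℓ) atTop (𝓝 (ind k ℓ)) := by
  have hanti : Antitone fun m => maxInduceProb (m + k) k ℓ :=
    antitone_nat_of_succ_le fun m => by
      simpa only [add_right_comm] using maxInduceProb_succ_le ℓ (Nat.le_add_left k m)
  have hbdd : BddBelow (Set.range fun m => maxInduceProb (m + k) k ℓ) :=
    ⟨0, Set.forall_mem_range.2 fun m => maxInduceProb_nonneg _ _ _⟩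
  have hlim := (tendsto_add_atTop_iff_nat (f := fun n => maxInduceProb n k ℓ) k).1
    (tendsto_atTop_ciInf hanti hbdd)
  rwa [ind, hlim.limUnder_eq]

/-- For `0 < ℓ < C(k,2)` we have `ind(k, ℓ) < 1`: there exist `ε > 0` and `N` such that
for all `n ≥ N` and every graph `G` on `n` vertices, `Pr[X_{G,k} = ℓ] ≤ 1 - ε`. -/
theorem ind_lt_one (k ℓ : ℕ) (hk : 2 ≤ k) (hℓ0 : 0 < ℓ) (hℓ : ℓ < k.choose 2) :
    ind k ℓ < 1 ∧
    ∃ ε : ℝ, 0 < ε ∧ ∃ N : ℕ, ∀ n ≥ N, ∀ G : SimpleGraph (Fin n),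
      uniformProb n k (fun A => edgeCount G A = ℓ) ≤ 1 - ε := by
  have hε : (0 : ℝ) < 1 / (k + 2).choose k := by
    have := Nat.choose_pos (by omega : k ≤ k + 2)
    positivity
  have hbound (n : ℕ) (hn : n ≥ k + 2) : maxInduceProb n k ℓ ≤ 1 - 1 / (k + 2).choose k :=
    ciSup_le (uniformProb_edgeCount_eq_le hk hℓ0 hℓ hn)
  refine ⟨?_, _, hε, k + 2, fun n hn => uniformProb_edgeCount_eq_le hk hℓ0 hℓ hn⟩
  have := le_of_tendsto (tendsto_maxInduceProb_ind k ℓ) (eventually_atTop.2 ⟨k + 2, hbound⟩)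
  linarith
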